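/- Descent for presentations with faithfully flat covers: let R be a commutative ring, let A₁, …, Aₙ be commutative R-algebras such that the product ring A = A₁ × ⋯ × Aₙ is faithfully flat as an R-module, and let M be an R-module. Consider the sequence ∏_i M ⊗[R] A_i → ∏_{i,j} M ⊗[R] A_i ⊗[R] A_j → ∏_{i,j,k} M ⊗[R] A_i ⊗[R] A_j ⊗[R] A_k, where the first map sends (u_i) to the family whose (i,j)-component is (u_i ⊗ 1) − τ_{i,j}(u_j), with u_i ⊗ 1 the image of u_i under m ⊗ a ↦ m ⊗ a ⊗ 1 and τ_{i,j}(u_j) the image of u_j under m ⊗ a ↦ m ⊗ 1 ⊗ a, and the second map is the analogous alternating sum of the three insertions of a unit. Then the sequence is exact at the middle term: the kernel of the second map equals the range of the first. -/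

import Mathlib

/-!
For a single algebra `S`, the differentials `d₀ : M ⊗ S → M ⊗ S ⊗ S` and
`d₁ : M ⊗ S ⊗ S → M ⊗ S ⊗ S ⊗ S` of the Amitsur complex satisfy `d₁ ∘ d₀ = 0`, and after
tensoring on the left with `S` the complex becomes contractible: multiplying the new copy of `S`
into the first `S`-factor, `a ⊗ m ⊗ b ⊗ … ↦ ab ⊗ m ⊗ …`, is a contracting homotopy. So
`S ⊗ d₀, S ⊗ d₁` is exact, and faithful flatness of `S` reflects this to exactness of `d₀, d₁`.
For `S = ∏ᵢ Aᵢ`, tensor products commute with the finite products, and these identifications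
carry `d₀, d₁` to the componentwise maps of the theorem.
-/

open TensorProduct LinearMap

set_option maxSynthPendingDepth 3

lemma LinearMap.exact_of_comp_eq_zero_of_homotopy {R M N P : Type*} [Ring R]
    [AddCommGroup M] [AddCommGroup N] [AddCommGroup P] [Module R M] [Module R N] [Module R P]
    {f : M →ₗ[R] N} {g : N →ₗ[R] P} (hgf : g ∘ₗ f = 0) (h₁ : N →ₗ[R] M) (h₂ : P →ₗ[R] N)
    (hh : h₂ ∘ₗ g - f ∘ₗ h₁ = LinearMap.id) :
    Function.Exact f g := by
  refine exact_of_comp_of_mem_range hgf fun y hy => ⟨-h₁ y, ?_⟩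
  have := congr($hh y)
  simp only [sub_apply, comp_apply, hy, map_zero, zero_sub, id_apply] at this
  rwa [map_neg]

section Amitsur

variable (R : Type*) [CommRing R] (S : Type*) [Ring S] [Algebra R S]
  (M : Type*) [AddCommGroup M] [Module R M]

noncomputable def amitsurD₀ : M ⊗[R] S →ₗ[R] (M ⊗[R] S) ⊗[R] S :=
  (TensorProduct.mk R (M ⊗[R] S) S).flip 1 - rTensor S ((TensorProduct.mk R M S).flip 1)

noncomputable def amitsurD₁ : (M ⊗[R] S) ⊗[R] S →ₗ[R] ((M ⊗[R] S) ⊗[R] S) ⊗[R] S :=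
  (TensorProduct.mk R ((M ⊗[R] S) ⊗[R] S) S).flip 1
    - rTensor S ((TensorProduct.mk R (M ⊗[R] S) S).flip 1)
    + rTensor S (rTensor S ((TensorProduct.mk R M S).flip 1))

@[simp]
lemma amitsurD₀_tmul (m : M) (a : S) :
    amitsurD₀ R S M (m ⊗ₜ[R] a) = (m ⊗ₜ a) ⊗ₜ 1 - (m ⊗ₜ 1) ⊗ₜ a := by
  simp [amitsurD₀]

@[simp]
lemma amitsurD₁_tmul (m : M) (a b : S) :
    amitsurD₁ R S M ((m ⊗ₜ[R] a) ⊗ₜ[R] b) =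
      ((m ⊗ₜ a) ⊗ₜ b) ⊗ₜ 1 - ((m ⊗ₜ a) ⊗ₜ 1) ⊗ₜ b + ((m ⊗ₜ 1) ⊗ₜ a) ⊗ₜ b := by
  simp [amitsurD₁]

lemma amitsurD₁_comp_amitsurD₀ : amitsurD₁ R S M ∘ₗ amitsurD₀ R S M = 0 := by
  ext m a
  simp

variable {R S} in
noncomputable def assocRTensor {X Y : Type*} [AddCommGroup X] [Module R X] [AddCommGroup Y]
    [Module R Y] (f : S ⊗[R] X →ₗ[R] S ⊗[R] Y) : S ⊗[R] (X ⊗[R] S) →ₗ[R] S ⊗[R] (Y ⊗[R] S) :=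
  (TensorProduct.assoc R S Y S).toLinearMap ∘ₗ rTensor S f ∘ₗ
    (TensorProduct.assoc R S X S).symm.toLinearMap

noncomputable def amitsurContraction : S ⊗[R] (M ⊗[R] S) →ₗ[R] S ⊗[R] M :=
  rTensor M (LinearMap.mul' R S) ∘ₗ (TensorProduct.assoc R S S M).symm.toLinearMap ∘ₗ
    lTensor S (TensorProduct.comm R M S).toLinearMap

@[simp]
lemma amitsurContraction_tmul (a : S) (m : M) (b : S) :
    amitsurContraction R S M (a ⊗ₜ[R] (m ⊗ₜ[R] b)) = (a * b) ⊗ₜ m := by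
  simp [amitsurContraction]

lemma amitsur_homotopy :
    assocRTensor (assocRTensor (amitsurContraction R S M)) ∘ₗ lTensor S (amitsurD₁ R S M)
      - lTensor S (amitsurD₀ R S M) ∘ₗ assocRTensor (amitsurContraction R S M) = LinearMap.id := by
  ext a m b c
  simp [assocRTensor, tmul_sub, tmul_add]

theorem exact_amitsurD₀_amitsurD₁ [Module.FaithfullyFlat R S] :
    Function.Exact (amitsurD₀ R S M) (amitsurD₁ R S M) := by
  refine Module.FaithfullyFlat.lTensor_reflects_exact R S _ _ <|
    exact_of_comp_eq_zero_of_homotopy ?_ _ _ (amitsur_homotopy R S M)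
  rw [← lTensor_comp, amitsurD₁_comp_amitsurD₀, lTensor_zero]

end Amitsur

def LinearEquiv.piUncurry (R : Type*) [Semiring R] {ι κ : Type*} (Z : ι → κ → Type*)
    [∀ i j, AddCommMonoid (Z i j)] [∀ i j, Module R (Z i j)] :
    (∀ i j, Z i j) ≃ₗ[R] ∀ p : ι × κ, Z p.1 p.2 where
  toFun f p := f p.1 p.2
  invFun g i j := g (i, j)
  map_add' _ _ := rfl
  map_smul' _ _ := rfl
  left_inv _ := rfl
  right_inv _ := rfl

section TensorPi

variable (R : Type*) [CommSemiring R] {ι κ : Type*} [Fintype ι] [DecidableEq ι] [Fintype κ]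
  [DecidableEq κ] (X : ι → Type*) [∀ i, AddCommMonoid (X i)] [∀ i, Module R (X i)]
  (Y : κ → Type*) [∀ j, AddCommMonoid (Y j)] [∀ j, Module R (Y j)]

noncomputable def TensorProduct.piPi :
    (∀ i, X i) ⊗[R] (∀ j, Y j) ≃ₗ[R] ∀ p : ι × κ, X p.1 ⊗[R] Y p.2 :=
  piLeft R _ X ≪≫ₗ LinearEquiv.piCongrRight (fun i => piRight R R (X i) Y) ≪≫ₗ
    LinearEquiv.piUncurry R fun i j => X i ⊗[R] Y j

@[simp]
lemma TensorProduct.piPi_tmul (x : ∀ i, X i) (y : ∀ j, Y j) :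
    piPi R X Y (x ⊗ₜ y) = fun p : ι × κ => x p.1 ⊗ₜ y p.2 := by
  funext p
  simp [piPi, LinearEquiv.piUncurry]

end TensorPi

section Pi

variable (R : Type*) [CommRing R] {ι : Type*} [Fintype ι] [DecidableEq ι]
  (A : ι → Type*) [∀ i, Ring (A i)] [∀ i, Algebra R (A i)]
  (M : Type*) [AddCommGroup M] [Module R M]

noncomputable def piAmitsurD₀ :
    (∀ i, M ⊗[R] A i) →ₗ[R] ∀ p : ι × ι, (M ⊗[R] A p.1) ⊗[R] A p.2 :=
  LinearMap.pi fun p =>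
    (TensorProduct.mk R (M ⊗[R] A p.1) (A p.2)).flip 1 ∘ₗ proj p.1
      - rTensor (A p.2) ((TensorProduct.mk R M (A p.1)).flip 1) ∘ₗ proj p.2

noncomputable def piAmitsurD₁ : (∀ p : ι × ι, (M ⊗[R] A p.1) ⊗[R] A p.2) →ₗ[R]
    ∀ q : (ι × ι) × ι, ((M ⊗[R] A q.1.1) ⊗[R] A q.1.2) ⊗[R] A q.2 :=
  LinearMap.pi fun q =>
    (TensorProduct.mk R ((M ⊗[R] A q.1.1) ⊗[R] A q.1.2) (A q.2)).flip 1 ∘ₗ proj q.1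
      - rTensor (A q.2) ((TensorProduct.mk R (M ⊗[R] A q.1.1) (A q.1.2)).flip 1) ∘ₗ
          proj (q.1.1, q.2)
      + rTensor (A q.2) (rTensor (A q.1.2) ((TensorProduct.mk R M (A q.1.1)).flip 1)) ∘ₗ
          proj (q.1.2, q.2)

noncomputable def piAmitsurEquiv₁ :
    (M ⊗[R] (∀ i, A i)) ⊗[R] (∀ i, A i) ≃ₗ[R] ∀ p : ι × ι, (M ⊗[R] A p.1) ⊗[R] A p.2 :=
  congr (piRight R R M A) (.refl R _) ≪≫ₗ piPi R (fun i => M ⊗[R] A i) A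

noncomputable def piAmitsurEquiv₂ :
    ((M ⊗[R] (∀ i, A i)) ⊗[R] (∀ i, A i)) ⊗[R] (∀ i, A i) ≃ₗ[R]
      ∀ q : (ι × ι) × ι, ((M ⊗[R] A q.1.1) ⊗[R] A q.1.2) ⊗[R] A q.2 :=
  congr (piAmitsurEquiv₁ R A M) (.refl R _) ≪≫ₗ
    piPi R (fun p : ι × ι => (M ⊗[R] A p.1) ⊗[R] A p.2) A

@[simp]
lemma piAmitsurEquiv₁_tmul (m : M) (a b : ∀ i, A i) :
    piAmitsurEquiv₁ R A M ((m ⊗ₜ a) ⊗ₜ b) = fun p : ι × ι => (m ⊗ₜ a p.1) ⊗ₜ b p.2 := by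
  simp [piAmitsurEquiv₁]

lemma piAmitsurD₀_comp_piRight :
    piAmitsurD₀ R A M ∘ₗ (piRight R R M A).toLinearMap =
      (piAmitsurEquiv₁ R A M).toLinearMap ∘ₗ amitsurD₀ R (∀ i, A i) M := by
  refine TensorProduct.ext' fun m a => funext fun p => ?_
  simp [piAmitsurD₀]

lemma piAmitsurD₁_comp_piAmitsurEquiv₁ :
    piAmitsurD₁ R A M ∘ₗ (piAmitsurEquiv₁ R A M).toLinearMap =
      (piAmitsurEquiv₂ R A M).toLinearMap ∘ₗ amitsurD₁ R (∀ i, A i) M := by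
  refine TensorProduct.ext_threefold fun m a b => funext fun q => ?_
  simp [piAmitsurD₁, piAmitsurEquiv₂]

theorem exact_piAmitsurD₀_piAmitsurD₁ [Module.FaithfullyFlat R (∀ i, A i)] :
    Function.Exact (piAmitsurD₀ R A M) (piAmitsurD₁ R A M) :=
  (exact_amitsurD₀_amitsurD₁ R _ M).of_ladder_linearEquiv_of_exact
    (piAmitsurD₀_comp_piRight R A M) (piAmitsurD₁_comp_piAmitsurEquiv₁ R A M)

end Pi

set_option maxSynthPendingDepth 3 in
/-- **Descent for presentations with faithfully flat covers.**
If the product ring `A = A 0 × ⋯ × A (n-1)` of commutative `R`-algebras is faithfully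
flat as an `R`-module, then for any `R`-module `M` the sequence
`∏ᵢ M ⊗ Aᵢ → ∏_{i,j} M ⊗ Aᵢ ⊗ Aⱼ → ∏_{i,j,k} M ⊗ Aᵢ ⊗ Aⱼ ⊗ Aₖ`, with maps the
alternating sums of the insertions of a unit, is exact at the middle term. -/
theorem stmt15 {R : Type*} [CommRing R] {n : ℕ} (A : Fin n → Type*)
    [∀ i, CommRing (A i)] [∀ i, Algebra R (A i)]
    [Module.FaithfullyFlat R (∀ i, A i)]
    (M : Type*) [AddCommGroup M] [Module R M] :
    {v : ∀ p : Fin n × Fin n, (M ⊗[R] A p.1) ⊗[R] A p.2 |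
      ∀ i j k : Fin n,
        (TensorProduct.mk R ((M ⊗[R] A i) ⊗[R] A j) (A k)).flip 1 (v (i, j))
          - LinearMap.rTensor (A k)
              ((TensorProduct.mk R (M ⊗[R] A i) (A j)).flip 1) (v (i, k))
          + LinearMap.rTensor (A k)
              (LinearMap.rTensor (A j) ((TensorProduct.mk R M (A i)).flip 1)) (v (j, k))
          = 0} =
    Set.range (fun (u : ∀ i, M ⊗[R] A i) (p : Fin n × Fin n) =>
      (TensorProduct.mk R (M ⊗[R] A p.1) (A p.2)).flip 1 (u p.1)
        - LinearMap.rTensor (A p.2) ((TensorProduct.mk R M (A p.1)).flip 1) (u p.2)) := by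
  ext v
  refine Iff.trans ?_ (exact_piAmitsurD₀_piAmitsurD₁ R A M v)
  exact ⟨fun h => funext fun q => h q.1.1 q.1.2 q.2, fun h i j k => congr_fun h ((i, j), k)⟩
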